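/- Let Ω = [[τ, z],[z, σ]] ∈ ℍ₂, set Y = Im τ · Im σ − (Im z)², α = Im z/Im τ, β = Im(z·conj(τ))/Im τ. Then for every s ∈ ℂ with Re s > 1: (Y/(2 Im τ)) ∫₀^∞ t^{−1−s} Σ_{(m,n)∈ℤ²∖{(0,0)}} e^{−πY|m+nτ|²/(t (Im τ)²)} [20 + 4 cos(2π Im(z(m+n·conj(τ)))/Im τ)] dt = (Γ(s)/(2π)) (Im τ/(πY))^{s−1} [20 E(τ,s) + 4 E(α,β; τ,s)], where E(τ,s) = Σ_{(m,n)≠(0,0)} (Im τ)^s/|m+nτ|^{2s} and E(α,β; τ,s) = Σ_{(m,n)≠(0,0)} e^{2πi(mα+nβ)} (Im τ)^s/|m+nτ|^{2s}. -/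

import Mathlib

open Complex
open scoped Real

noncomputable section

/-- The Jacobi theta function θ₁. -/
def theta1 (τ z : ℂ) : ℂ :=
  ∑' n : ℤ, exp ((π : ℂ) * I * τ * ((n : ℂ) + 1/2)^2 +
    2 * (π : ℂ) * I * ((n : ℂ) + 1/2) * (z + 1/2))

/-- The Jacobi theta function θ₂. -/
def theta2 (τ z : ℂ) : ℂ :=
  ∑' n : ℤ, exp ((π : ℂ) * I * τ * ((n : ℂ) + 1/2)^2 +
    2 * (π : ℂ) * I * ((n : ℂ) + 1/2) * z)

/-- The Jacobi theta function θ₃. -/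
def theta3 (τ z : ℂ) : ℂ :=
  ∑' n : ℤ, exp ((π : ℂ) * I * τ * (n : ℂ)^2 + 2 * (π : ℂ) * I * (n : ℂ) * z)

/-- The Jacobi theta function θ₄. -/
def theta4 (τ z : ℂ) : ℂ :=
  ∑' n : ℤ, exp ((π : ℂ) * I * τ * (n : ℂ)^2 + 2 * (π : ℂ) * I * (n : ℂ) * (z + 1/2))

/-- The Dedekind eta function η(τ) = q^{1/24} ∏_{n≥1} (1 - qⁿ), q = e^{2πiτ}. -/
def etaD (τ : ℂ) : ℂ :=
  exp (2 * (π : ℂ) * I * τ / 24) * ∏' n : ℕ, (1 - exp (2 * (π : ℂ) * I * τ) ^ (n + 1))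

/-- K(τ,z) = i θ₁(τ,z)/η(τ)³. -/
def Kf (τ z : ℂ) : ℂ := I * theta1 τ z / (etaD τ)^3

/-- The K3 elliptic genus. -/
def Zk3 (τ z : ℂ) : ℂ :=
  8 * ((theta2 τ z / theta2 τ 0)^2 + (theta3 τ z / theta3 τ 0)^2 +
       (theta4 τ z / theta4 τ 0)^2)

/-- σ_k(n) = Σ_{d ∣ n} d^k. -/
def sigmaFn (k n : ℕ) : ℕ := ∑ d ∈ n.divisors, d ^ k

/-- The normalized Eisenstein series E₄. -/
def E4 (τ : ℂ) : ℂ :=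
  1 + 240 * ∑' n : ℕ, (sigmaFn 3 (n+1) : ℂ) * exp (2 * (π : ℂ) * I * τ) ^ (n + 1)

/-- The normalized Eisenstein series E₆. -/
def E6 (τ : ℂ) : ℂ :=
  1 - 504 * ∑' n : ℕ, (sigmaFn 5 (n+1) : ℂ) * exp (2 * (π : ℂ) * I * τ) ^ (n + 1)

/-- The Weierstrass ℘-function of the lattice ℤ + ℤτ, in the normalization
℘(τ,z) = (2πi)^{-2}[z^{-2} + Σ_{0 ≠ ω ∈ ℤ+ℤτ}((z-ω)^{-2} - ω^{-2})]. -/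
def wp (τ z : ℂ) : ℂ :=
  ((2 * (π : ℂ) * I)^2)⁻¹ * ((z^2)⁻¹ +
    ∑' w : {v : ℤ × ℤ // v ≠ (0, 0)},
      (((z - ((w.1.1 : ℂ) + (w.1.2 : ℂ) * τ))^2)⁻¹ -
        ((((w.1.1 : ℂ) + (w.1.2 : ℂ) * τ))^2)⁻¹))

/-- The half-period value e₁(τ) = ℘(τ, 1/2). -/
def pe1 (τ : ℂ) : ℂ := wp τ (1/2)

/-- The half-period value e₂(τ) = ℘(τ, -(τ+1)/2). -/
def pe2 (τ : ℂ) : ℂ := wp τ (-(τ + 1)/2)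

/-- The half-period value e₃(τ) = ℘(τ, τ/2). -/
def pe3 (τ : ℂ) : ℂ := wp τ (τ/2)

/-- ζ_ℓ(τ,z) = ℓ^{-1} Σ_{a,d ≥ 1, ad = ℓ} Σ_{b=0}^{d-1} Z((aτ+b)/d, az),
the Hecke operator V_ℓ (for weight 0, index 1) applied to the K3 elliptic genus. -/
def zetaHecke (ℓ : ℕ) (τ z : ℂ) : ℂ :=
  (ℓ : ℂ)⁻¹ * ∑ a ∈ Nat.divisors ℓ, ∑ b ∈ Finset.range (ℓ / a),
    Zk3 (((a : ℂ) * τ + (b : ℂ)) / ((ℓ / a : ℕ) : ℂ)) ((a : ℂ) * z)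

/-- The Schur polynomials s_m, characterized by
Σ_{m≥0} s_m(x₁,…,x_m) pᵐ = exp(Σ_{ℓ≥1} x_ℓ p^ℓ), via the equivalent recursion
m s_m = Σ_{ℓ=1}^m ℓ x_ℓ s_{m-ℓ}, s₀ = 1. -/
def schur (x : ℕ → ℂ) : ℕ → ℂ
  | 0 => 1
  | m + 1 => ((m : ℂ) + 1)⁻¹ *
      ∑ ℓ ∈ Finset.range (m + 1), ((ℓ : ℂ) + 1) * x (ℓ + 1) * schur x (m - ℓ)
  decreasing_by exact Nat.lt_succ_of_le (Nat.sub_le m ℓ)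

/-- The level-one A₁ theta function Θ₀(τ,z) = θ_{0,1}(τ,2z) = Σ_{r ∈ 2ℤ} q^{r²/4} y^r. -/
def Theta0 (τ z : ℂ) : ℂ :=
  ∑' n : ℤ, exp (2 * (π : ℂ) * I * τ * (n : ℂ)^2 + 2 * (π : ℂ) * I * (2 * (n : ℂ)) * z)

/-- The level-one A₁ theta function Θ₁(τ,z) = θ_{1,1}(τ,2z) = Σ_{r ∈ 2ℤ+1} q^{r²/4} y^r. -/
def Theta1 (τ z : ℂ) : ℂ :=
  ∑' n : ℤ, exp (2 * (π : ℂ) * I * τ * ((2 * (n : ℂ) + 1)^2 / 4) +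
    2 * (π : ℂ) * I * (2 * (n : ℂ) + 1) * z)

/-- The genus-two theta constant with characteristic ((a₁,a₂),(b₁,b₂)),
evaluated at Ω = [[τ, z],[z, σ]]. -/
def thetaChar2 (a₁ a₂ b₁ b₂ : ℂ) (τ z σ : ℂ) : ℂ :=
  ∑' n : ℤ × ℤ,
    exp ((π : ℂ) * I * (τ * ((n.1 : ℂ) + a₁)^2 + 2 * z * ((n.1 : ℂ) + a₁) * ((n.2 : ℂ) + a₂) +
        σ * ((n.2 : ℂ) + a₂)^2) +
      2 * (π : ℂ) * I * (((n.1 : ℂ) + a₁) * b₁ + ((n.2 : ℂ) + a₂) * b₂))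

/-- Encoding of a characteristic entry: `true ↦ 1/2`, `false ↦ 0`. -/
def halfc (b : Bool) : ℂ := if b then 1/2 else 0

/-- The ten even characteristics ((a₁,a₂),(b₁,b₂)) ∈ {0,1/2}⁴, encoded by booleans;
evenness of (a,b) means 4ᵗab = 4(a₁b₁ + a₂b₂) is an even integer. -/
def evenChars : Finset ((Bool × Bool) × (Bool × Bool)) :=
  Finset.univ.filter (fun c => (c.1.1 && c.2.1) = (c.1.2 && c.2.2))

/-- Δ₅(Ω): the product of the ten even genus-two theta constants. -/
def Delta5 (τ z σ : ℂ) : ℂ :=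
  ∏ c ∈ evenChars,
    thetaChar2 (halfc c.1.1) (halfc c.1.2) (halfc c.2.1) (halfc c.2.2) τ z σ


open MeasureTheory Set

section AuxDegen

lemma rcpow {x : ℝ} (hx : 0 < x) (w : ℂ) :
    (x : ℂ) ^ w = Complex.exp (w * (Real.log x : ℂ)) := by
  rw [Complex.cpow_def_of_ne_zero (Complex.ofReal_ne_zero.mpr hx.ne'),
    ← Complex.ofReal_log hx.le, mul_comm]

lemma ofReal_pos_eq_exp {x : ℝ} (hx : 0 < x) :
    (x : ℂ) = Complex.exp ((Real.log x : ℝ) : ℂ) := by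
  rw [← Complex.ofReal_exp, Real.exp_log hx]

lemma cpow_neg_one_sub {x : ℝ} (hx : 0 < x) (s : ℂ) :
    (x : ℂ) ^ (-1 - s) = ((x ^ (-2 : ℝ) : ℝ) : ℂ) * (((x⁻¹ : ℝ) : ℂ)) ^ (s - 1) := by
  rw [rcpow hx, Real.rpow_def_of_pos hx, Complex.ofReal_exp,
    rcpow (inv_pos.mpr hx), Real.log_inv, ← Complex.exp_add]
  congr 1
  push_cast
  ring

/-- The integrand `y ^ (s-1) * exp (-(A y))` is integrable on `(0,∞)`. -/
lemma int_aux {s : ℂ} (hs : 0 < s.re) {A : ℝ} (hA : 0 < A) :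
    IntegrableOn (fun y : ℝ => (y : ℂ) ^ (s - 1) * Complex.exp (-((A : ℂ) * y))) (Ioi 0) := by
  have h0 := Complex.GammaIntegral_convergent hs
  have h1 : IntegrableOn
      (fun x : ℝ => (Real.exp (-(A * x)) : ℂ) * ((A * x : ℝ) : ℂ) ^ (s - 1)) (Ioi 0) := by
    have := (integrableOn_Ioi_comp_mul_left_iff
      (fun x : ℝ => (Real.exp (-x) : ℂ) * (x : ℂ) ^ (s - 1)) 0 hA).mpr
    rw [mul_zero] at this
    exact this h0
  have h2 : IntegrableOn
      (fun x : ℝ => ((A : ℂ) ^ (s - 1))⁻¹ * ((Real.exp (-(A * x)) : ℂ) * ((A * x : ℝ) : ℂ) ^ (s - 1)))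
      (Ioi 0) := h1.const_mul _
  refine h2.congr_fun (fun y hy => ?_) measurableSet_Ioi
  have hy' : (0 : ℝ) < y := hy
  have hAe : (A : ℂ) ^ (s - 1) ≠ 0 := by
    rw [rcpow hA]; exact Complex.exp_ne_zero _
  beta_reduce
  rw [Complex.ofReal_mul, mul_cpow_ofReal_nonneg hA.le hy'.le]
  push_cast
  field_simp





lemma gammaIntegrable {s : ℂ} (hs : 0 < s.re) {A : ℝ} (hA : 0 < A) :
    IntegrableOn (fun t : ℝ => (t : ℂ) ^ (-1 - s) * (Real.exp (-(A / t)) : ℂ)) (Ioi 0) := by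
  have h := (integrableOn_Ioi_comp_rpow_iff'
    (fun y : ℝ => (y : ℂ) ^ (s - 1) * Complex.exp (-((A : ℂ) * y))) (p := -1)
    (by norm_num)).mpr (int_aux hs hA)
  refine h.congr_fun (fun x hx => ?_) measurableSet_Ioi
  have hx' : (0 : ℝ) < x := hx
  have h1 : x ^ (-1 : ℝ) = x⁻¹ := Real.rpow_neg_one x
  beta_reduce
  rw [h1, real_smul, show (-1 : ℝ) - 1 = (-2 : ℝ) by norm_num,
    cpow_neg_one_sub hx' s]
  have h2 : Complex.exp (-((A : ℂ) * (x⁻¹ : ℝ))) = (Real.exp (-(A / x)) : ℂ) := by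
    rw [Complex.ofReal_exp]
    push_cast
    rw [div_eq_mul_inv]
  rw [← h2]
  ring

lemma gammaValue {s : ℂ} (hs : 0 < s.re) {A : ℝ} (hA : 0 < A) :
    ∫ t in Ioi (0 : ℝ), (t : ℂ) ^ (-1 - s) * (Real.exp (-(A / t)) : ℂ)
      = Complex.Gamma s * (A : ℂ) ^ (-s) := by
  have h := integral_comp_rpow_Ioi
    (fun y : ℝ => (y : ℂ) ^ (s - 1) * Complex.exp (-((A : ℂ) * y))) (p := -1) (by norm_num)
  have hcongr : ∫ t in Ioi (0 : ℝ), (t : ℂ) ^ (-1 - s) * (Real.exp (-(A / t)) : ℂ)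
      = ∫ x in Ioi (0 : ℝ), (|(-1 : ℝ)| * x ^ ((-1 : ℝ) - 1)) •
          (fun y : ℝ => (y : ℂ) ^ (s - 1) * Complex.exp (-((A : ℂ) * y))) (x ^ (-1 : ℝ)) := by
    refine setIntegral_congr_fun measurableSet_Ioi (fun x hx => ?_)
    have hx' : (0 : ℝ) < x := hx
    simp only [abs_neg, abs_one, one_mul]
    rw [Real.rpow_neg_one x, real_smul, show (-1 : ℝ) - 1 = (-2 : ℝ) by norm_num,
      cpow_neg_one_sub hx' s]
    have h2 : Complex.exp (-((A : ℂ) * (x⁻¹ : ℝ))) = (Real.exp (-(A / x)) : ℂ) := by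
      rw [Complex.ofReal_exp]; push_cast; rw [div_eq_mul_inv]
    rw [← h2]
    ring
  rw [hcongr, h, Complex.integral_cpow_mul_exp_neg_mul_Ioi hs hA]
  have : ((1 : ℂ) / A) ^ s = (A : ℂ) ^ (-s) := by
    rw [show (1 / (A : ℂ)) = ((1 / A : ℝ) : ℂ) by push_cast; ring,
      rcpow (by positivity), rcpow hA]
    congr 1
    rw [one_div, Real.log_inv]
    push_cast
    ring
  rw [this]; ring





lemma gammaValueReal {σ : ℝ} (hσ : 0 < σ) {A : ℝ} (hA : 0 < A) :
    ∫ t in Ioi (0 : ℝ), t ^ (-1 - σ) * Real.exp (-(A / t))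
      = Real.Gamma σ * A ^ (-σ) := by
  have h := gammaValue (s := (σ : ℂ)) (by simpa using hσ) hA
  have h2 : ∫ t in Ioi (0 : ℝ), (t : ℂ) ^ (-1 - (σ : ℂ)) * (Real.exp (-(A / t)) : ℂ)
      = ((∫ t in Ioi (0 : ℝ), t ^ (-1 - σ) * Real.exp (-(A / t)) : ℝ) : ℂ) := by
    have hstep : ∫ t in Ioi (0 : ℝ), (t : ℂ) ^ (-1 - (σ : ℂ)) * (Real.exp (-(A / t)) : ℂ)
        = ∫ t in Ioi (0 : ℝ), ((t ^ (-1 - σ) * Real.exp (-(A / t)) : ℝ) : ℂ) := by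
      refine setIntegral_congr_fun measurableSet_Ioi (fun t ht => ?_)
      have ht' : (0 : ℝ) < t := ht
      rw [Complex.ofReal_mul, Complex.ofReal_cpow ht'.le]
      push_cast
      ring
    rw [hstep]
    exact integral_ofReal
  rw [h2] at h
  have h3 : (Complex.Gamma (σ : ℂ)) * ((A : ℂ) ^ (-(σ : ℂ)))
      = ((Real.Gamma σ * A ^ (-σ) : ℝ) : ℂ) := by
    rw [Complex.Gamma_ofReal, Complex.ofReal_mul, Complex.ofReal_cpow hA.le]
    push_cast
    ring
  rw [h3] at h
  exact_mod_cast h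

/-- Summability of the Epstein-type lattice sum for exponent `k > 2`. -/
lemma summable_lattice (τ : ℂ) (hτ : 0 < τ.im) {k : ℝ} (hk : 2 < k) :
    Summable fun v : {v : ℤ × ℤ // v ≠ (0, 0)} =>
      ‖(v.1.1 : ℂ) + (v.1.2 : ℂ) * τ‖ ^ (-k) := by
  have hfull : Summable fun x : Fin 2 → ℤ =>
      ‖(x 0 : ℂ) * τ + (x 1 : ℂ)‖ ^ (-k) := by
    have hb := EisensteinSeries.summable_one_div_norm_rpow hk
    refine Summable.of_nonneg_of_le (fun x => Real.rpow_nonneg (norm_nonneg _) _)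
      (fun x => ?_) (hb.mul_left ((EisensteinSeries.r ⟨τ, hτ⟩) ^ (-k)))
    exact EisensteinSeries.summand_bound ⟨τ, hτ⟩ (by linarith : (0:ℝ) ≤ k) x
  have h2 : Summable fun v : ℤ × ℤ =>
      ‖(v.1 : ℂ) + (v.2 : ℂ) * τ‖ ^ (-k) := by
    have hinj : Function.Injective (fun v : ℤ × ℤ => (![v.2, v.1] : Fin 2 → ℤ)) := by
      intro a b hab
      have h0 := congrFun hab 0
      have h1 := congrFun hab 1
      simp at h0 h1
      exact Prod.ext h1 h0
    have := hfull.comp_injective hinj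
    convert this using 2 with v
    · rfl
    · simp [Function.comp, add_comm]
  exact h2.subtype _





/-- The scalar identity combining the powers. -/
lemma coeff_id {Y T a : ℝ} (hY : 0 < Y) (hT : 0 < T) (ha : 0 < a) (s : ℂ) :
    ((Y / (2 * T) : ℝ) : ℂ) * ((π * Y * a ^ 2 / T ^ 2 : ℝ) : ℂ) ^ (-s)
      = 1 / (2 * (π : ℂ)) * ((T / (π * Y) : ℝ) : ℂ) ^ (s - 1) *
        ((T : ℝ) : ℂ) ^ s / ((a : ℝ) : ℂ) ^ (2 * s) := by
  have hπ : (0 : ℝ) < π := Real.pi_pos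
  have e1 : (1 : ℂ) / (2 * (π : ℂ)) = ((1 / (2 * π) : ℝ) : ℂ) := by push_cast; ring
  rw [e1, ofReal_pos_eq_exp (by positivity : (0:ℝ) < Y / (2 * T)),
    ofReal_pos_eq_exp (by positivity : (0:ℝ) < 1 / (2 * π)),
    rcpow (by positivity : (0:ℝ) < π * Y * a ^ 2 / T ^ 2),
    rcpow (by positivity : (0:ℝ) < T / (π * Y)), rcpow hT, rcpow ha,
    ← Complex.exp_add, ← Complex.exp_add, ← Complex.exp_add, ← Complex.exp_sub]
  congr 1
  rw [Real.log_div (by positivity) (by positivity),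
    Real.log_div (by positivity) (by positivity),
    Real.log_div (by positivity) (by positivity),
    Real.log_div (by positivity) (by positivity),
    Real.log_mul (by positivity) (by positivity),
    Real.log_mul (by positivity) (by positivity),
    Real.log_mul (by positivity) (by positivity),
    Real.log_mul (by positivity) (by positivity),
    Real.log_pow, Real.log_pow, Real.log_one]
  push_cast
  ring

/-- Negation as an equivalence on nonzero lattice vectors. -/
def negE : {v : ℤ × ℤ // v ≠ (0, 0)} ≃ {v : ℤ × ℤ // v ≠ (0, 0)} where
  toFun v := ⟨(-v.1.1, -v.1.2), by
    intro h
    exact v.2 (by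
      have h1 : -v.1.1 = 0 := by rw [Prod.mk.injEq] at h; exact h.1
      have h2 : -v.1.2 = 0 := by rw [Prod.mk.injEq] at h; exact h.2
      have : v.1 = (v.1.1, v.1.2) := rfl
      rw [this, neg_eq_zero] at *
      exact Prod.ext (by simpa using h1) (by simpa using h2))⟩
  invFun v := ⟨(-v.1.1, -v.1.2), by
    intro h
    exact v.2 (by
      have h1 : -v.1.1 = 0 := by rw [Prod.mk.injEq] at h; exact h.1
      have h2 : -v.1.2 = 0 := by rw [Prod.mk.injEq] at h; exact h.2
      exact Prod.ext (by simpa using h1) (by simpa using h2))⟩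
  left_inv v := by ext <;> simp
  right_inv v := by ext <;> simp



lemma main_aux (T Y : ℝ) (hT : 0 < T) (hY : 0 < Y) (s : ℂ) (hs : 1 < s.re)
    (a P : {v : ℤ × ℤ // v ≠ (0, 0)} → ℝ)
    (ha : ∀ v, 0 < a v)
    (haneg : ∀ v, a (negE v) = a v)
    (hPneg : ∀ v, P (negE v) = -P v)
    (hsum : ∀ k : ℝ, 2 < k → Summable fun v => a v ^ (-k)) :
    ((Y / (2 * T) : ℝ) : ℂ) *
      ∫ t in Ioi (0 : ℝ), (t : ℂ) ^ (-1 - s) *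
        ∑' v : {v : ℤ × ℤ // v ≠ (0, 0)},
          ((Real.exp (-(π * Y * a v ^ 2) / (t * T ^ 2)) * (20 + 4 * Real.cos (P v)) : ℝ) : ℂ)
    = Complex.Gamma s / (2 * (π : ℂ)) * ((T / (π * Y) : ℝ) : ℂ) ^ (s - 1) *
      (20 * ∑' v : {v : ℤ × ℤ // v ≠ (0, 0)}, ((T : ℝ) : ℂ) ^ s / ((a v : ℝ) : ℂ) ^ (2 * s) +
       4 * ∑' v : {v : ℤ × ℤ // v ≠ (0, 0)},
         Complex.exp (Complex.I * ((P v : ℝ) : ℂ)) * ((T : ℝ) : ℂ) ^ s /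
           ((a v : ℝ) : ℂ) ^ (2 * s)) := by
  have hπ : (0 : ℝ) < π := Real.pi_pos
  have hs0 : 0 < s.re := lt_trans one_pos hs
  have hσ0 : (0 : ℝ) < s.re := hs0
  have hA : ∀ v, 0 < π * Y * a v ^ 2 / T ^ 2 := fun v =>
    div_pos (mul_pos (mul_pos hπ hY) (pow_pos (ha v) 2)) (pow_pos hT 2)
  -- Step 1: rewrite the integrand
  have hInteg : ∀ t : ℝ, (t : ℂ) ^ (-1 - s) *
        ∑' v : {v : ℤ × ℤ // v ≠ (0, 0)},
          ((Real.exp (-(π * Y * a v ^ 2) / (t * T ^ 2)) * (20 + 4 * Real.cos (P v)) : ℝ) : ℂ)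
      = ∑' v : {v : ℤ × ℤ // v ≠ (0, 0)},
          ((20 + 4 * Real.cos (P v) : ℝ) : ℂ) *
            ((t : ℂ) ^ (-1 - s) * ((Real.exp (-(π * Y * a v ^ 2 / T ^ 2 / t)) : ℝ) : ℂ)) := by
    intro t
    rw [← tsum_mul_left]
    refine tsum_congr fun v => ?_
    rw [show -(π * Y * a v ^ 2) / (t * T ^ 2) = -(π * Y * a v ^ 2 / T ^ 2 / t) by
      rw [div_div, mul_comm (T ^ 2) t, neg_div]]
    push_cast
    ring
  simp only [hInteg]
  -- Step 2: swap the integral and the sum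
  have hInt : ∀ v : {v : ℤ × ℤ // v ≠ (0, 0)},
      Integrable (fun t : ℝ => ((20 + 4 * Real.cos (P v) : ℝ) : ℂ) *
        ((t : ℂ) ^ (-1 - s) * ((Real.exp (-(π * Y * a v ^ 2 / T ^ 2 / t)) : ℝ) : ℂ)))
        (volume.restrict (Ioi 0)) := fun v =>
    ((gammaIntegrable hs0 (hA v)).const_mul _)
  have hcbound : ∀ v : {v : ℤ × ℤ // v ≠ (0, 0)}, |20 + 4 * Real.cos (P v)| ≤ 24 := by
    intro v
    have h1 := Real.neg_one_le_cos (P v)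
    have h2 := Real.cos_le_one (P v)
    rw [abs_le]
    constructor <;> nlinarith
  have hval : ∀ v : {v : ℤ × ℤ // v ≠ (0, 0)},
      (∫ t in Ioi (0:ℝ), ‖((20 + 4 * Real.cos (P v) : ℝ) : ℂ) *
        ((t : ℂ) ^ (-1 - s) * ((Real.exp (-(π * Y * a v ^ 2 / T ^ 2 / t)) : ℝ) : ℂ))‖)
      = |20 + 4 * Real.cos (P v)| *
          (Real.Gamma s.re * (π * Y * a v ^ 2 / T ^ 2) ^ (-s.re)) := by
    intro v
    have hcong : EqOn (fun t : ℝ => ‖((20 + 4 * Real.cos (P v) : ℝ) : ℂ) *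
        ((t : ℂ) ^ (-1 - s) * ((Real.exp (-(π * Y * a v ^ 2 / T ^ 2 / t)) : ℝ) : ℂ))‖)
        (fun t : ℝ => |20 + 4 * Real.cos (P v)| *
          (t ^ (-1 - s.re) * Real.exp (-(π * Y * a v ^ 2 / T ^ 2 / t)))) (Ioi 0) := by
      intro t ht
      have ht' : (0 : ℝ) < t := ht
      simp only [norm_mul, Complex.norm_real, Real.norm_eq_abs,
        Complex.norm_cpow_eq_rpow_re_of_pos ht', abs_of_pos (Real.exp_pos _)]
      have : (-1 - s).re = -1 - s.re := by simp
      rw [this]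
    rw [setIntegral_congr_fun measurableSet_Ioi hcong, integral_const_mul,
      gammaValueReal hσ0 (hA v)]
  have hsum24 : Summable fun v : {v : ℤ × ℤ // v ≠ (0, 0)} =>
      |20 + 4 * Real.cos (P v)| * (Real.Gamma s.re * (π * Y * a v ^ 2 / T ^ 2) ^ (-s.re)) := by
    have hG : (0 : ℝ) < Real.Gamma s.re := Real.Gamma_pos_of_pos hσ0
    have hsplit : ∀ v : {v : ℤ × ℤ // v ≠ (0, 0)},
        (π * Y * a v ^ 2 / T ^ 2) ^ (-s.re)
          = (π * Y / T ^ 2) ^ (-s.re) * a v ^ (-(2 * s.re)) := by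
      intro v
      rw [show π * Y * a v ^ 2 / T ^ 2 = (π * Y / T ^ 2) * a v ^ 2 by ring,
        Real.mul_rpow (le_of_lt (div_pos (mul_pos hπ hY) (pow_pos hT 2))) (sq_nonneg _),
        ← Real.rpow_natCast (a v) 2, ← Real.rpow_mul (ha v).le]
      norm_num
    refine Summable.of_nonneg_of_le (fun v => mul_nonneg (abs_nonneg _)
      (mul_nonneg hG.le (Real.rpow_nonneg (hA v).le _))) (fun v => ?_)
      (((hsum (2 * s.re) (by linarith)).mul_left
        (24 * (Real.Gamma s.re * (π * Y / T ^ 2) ^ (-s.re)))))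
    rw [hsplit v]
    have h1 : |20 + 4 * Real.cos (P v)| *
        (Real.Gamma s.re * ((π * Y / T ^ 2) ^ (-s.re) * a v ^ (-(2 * s.re))))
        ≤ 24 * (Real.Gamma s.re * ((π * Y / T ^ 2) ^ (-s.re) * a v ^ (-(2 * s.re)))) := by
      refine mul_le_mul_of_nonneg_right (hcbound v) (mul_nonneg hG.le (mul_nonneg
        (Real.rpow_nonneg (le_of_lt (div_pos (mul_pos hπ hY) (pow_pos hT 2))) _)
        (Real.rpow_nonneg (ha v).le _)))
    calc |20 + 4 * Real.cos (P v)| *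
        (Real.Gamma s.re * ((π * Y / T ^ 2) ^ (-s.re) * a v ^ (-(2 * s.re))))
        ≤ 24 * (Real.Gamma s.re * ((π * Y / T ^ 2) ^ (-s.re) * a v ^ (-(2 * s.re)))) := h1
      _ = 24 * (Real.Gamma s.re * (π * Y / T ^ 2) ^ (-s.re)) * a v ^ (-(2 * s.re)) := by ring
  have hNorm : Summable fun v : {v : ℤ × ℤ // v ≠ (0, 0)} =>
      ∫ t in Ioi (0:ℝ), ‖((20 + 4 * Real.cos (P v) : ℝ) : ℂ) *
        ((t : ℂ) ^ (-1 - s) * ((Real.exp (-(π * Y * a v ^ 2 / T ^ 2 / t)) : ℝ) : ℂ))‖ := by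
    refine hsum24.congr fun v => ?_
    exact (hval v).symm
  rw [← MeasureTheory.integral_tsum_of_summable_integral_norm hInt hNorm]
  -- Step 3: evaluate each integral
  have hTermInt : ∀ v : {v : ℤ × ℤ // v ≠ (0, 0)},
      (∫ t in Ioi (0:ℝ), ((20 + 4 * Real.cos (P v) : ℝ) : ℂ) *
        ((t : ℂ) ^ (-1 - s) * ((Real.exp (-(π * Y * a v ^ 2 / T ^ 2 / t)) : ℝ) : ℂ)))
      = ((20 + 4 * Real.cos (P v) : ℝ) : ℂ) *
          (Complex.Gamma s * ((π * Y * a v ^ 2 / T ^ 2 : ℝ) : ℂ) ^ (-s)) := by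
    intro v
    rw [integral_const_mul, gammaValue hs0 (hA v)]
  simp only [hTermInt]
  -- Step 4: massage the RHS
  have hd : ∀ v : {v : ℤ × ℤ // v ≠ (0, 0)}, ((a v : ℝ) : ℂ) ^ (2 * s) ≠ 0 := by
    intro v
    rw [rcpow (ha v)]
    exact Complex.exp_ne_zero _
  have hwnorm : ∀ v : {v : ℤ × ℤ // v ≠ (0, 0)},
      ‖((T : ℝ) : ℂ) ^ s / ((a v : ℝ) : ℂ) ^ (2 * s)‖
        = T ^ s.re * a v ^ (-(2 * s.re)) := by
    intro v
    rw [norm_div,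
      Complex.norm_cpow_eq_rpow_re_of_pos hT, Complex.norm_cpow_eq_rpow_re_of_pos (ha v),
      show (2 * s).re = 2 * s.re by simp, Real.rpow_neg (ha v).le, div_eq_mul_inv]
  have hw : Summable fun v : {v : ℤ × ℤ // v ≠ (0, 0)} =>
      ((T : ℝ) : ℂ) ^ s / ((a v : ℝ) : ℂ) ^ (2 * s) := by
    refine Summable.of_norm ?_
    refine ((hsum (2 * s.re) (by linarith)).mul_left (T ^ s.re)).congr fun v => ?_
    exact (hwnorm v).symm
  have hE : Summable fun v : {v : ℤ × ℤ // v ≠ (0, 0)} =>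
      Complex.exp (Complex.I * ((P v : ℝ) : ℂ)) * ((T : ℝ) : ℂ) ^ s /
        ((a v : ℝ) : ℂ) ^ (2 * s) := by
    refine Summable.of_norm ?_
    refine ((hsum (2 * s.re) (by linarith)).mul_left (T ^ s.re)).congr fun v => ?_
    rw [mul_div_assoc, norm_mul, hwnorm v, Complex.norm_exp]
    simp
  have hE' : Summable fun v : {v : ℤ × ℤ // v ≠ (0, 0)} =>
      Complex.exp (-(Complex.I * ((P v : ℝ) : ℂ))) * ((T : ℝ) : ℂ) ^ s /
        ((a v : ℝ) : ℂ) ^ (2 * s) := by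
    refine Summable.of_norm ?_
    refine ((hsum (2 * s.re) (by linarith)).mul_left (T ^ s.re)).congr fun v => ?_
    rw [mul_div_assoc, norm_mul, hwnorm v, Complex.norm_exp]
    simp
  have hS1' : (∑' v : {v : ℤ × ℤ // v ≠ (0, 0)},
        Complex.exp (Complex.I * ((P v : ℝ) : ℂ)) * ((T : ℝ) : ℂ) ^ s /
          ((a v : ℝ) : ℂ) ^ (2 * s))
      = ∑' v : {v : ℤ × ℤ // v ≠ (0, 0)},
          Complex.exp (-(Complex.I * ((P v : ℝ) : ℂ))) * ((T : ℝ) : ℂ) ^ s /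
            ((a v : ℝ) : ℂ) ^ (2 * s) := by
    rw [← Equiv.tsum_eq negE (fun v => Complex.exp (Complex.I * ((P v : ℝ) : ℂ)) *
      ((T : ℝ) : ℂ) ^ s / ((a v : ℝ) : ℂ) ^ (2 * s))]
    refine tsum_congr fun v => ?_
    rw [hPneg v, haneg v]
    push_cast
    ring_nf
  have hcos' : ∀ v : {v : ℤ × ℤ // v ≠ (0, 0)},
      Complex.exp (Complex.I * ((P v : ℝ) : ℂ)) + Complex.exp (-(Complex.I * ((P v : ℝ) : ℂ)))
        = 2 * ((Real.cos (P v) : ℝ) : ℂ) := by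
    intro v
    rw [Complex.ofReal_cos]
    have hc : Complex.cos ((P v : ℝ) : ℂ)
        = (Complex.exp (((P v : ℝ) : ℂ) * Complex.I) +
           Complex.exp (-((P v : ℝ) : ℂ) * Complex.I)) / 2 := rfl
    rw [hc, show (((P v : ℝ) : ℂ)) * Complex.I = Complex.I * ((P v : ℝ) : ℂ) by ring,
      show (-((P v : ℝ) : ℂ)) * Complex.I = -(Complex.I * ((P v : ℝ) : ℂ)) by ring]
    ring
  have hRHSsum : (20 * ∑' v : {v : ℤ × ℤ // v ≠ (0, 0)},
        ((T : ℝ) : ℂ) ^ s / ((a v : ℝ) : ℂ) ^ (2 * s) +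
       4 * ∑' v : {v : ℤ × ℤ // v ≠ (0, 0)},
         Complex.exp (Complex.I * ((P v : ℝ) : ℂ)) * ((T : ℝ) : ℂ) ^ s /
           ((a v : ℝ) : ℂ) ^ (2 * s))
      = ∑' v : {v : ℤ × ℤ // v ≠ (0, 0)},
          ((20 + 4 * Real.cos (P v) : ℝ) : ℂ) *
            (((T : ℝ) : ℂ) ^ s / ((a v : ℝ) : ℂ) ^ (2 * s)) := by
    have h4 : (4 : ℂ) * ∑' v : {v : ℤ × ℤ // v ≠ (0, 0)},
        Complex.exp (Complex.I * ((P v : ℝ) : ℂ)) * ((T : ℝ) : ℂ) ^ s /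
          ((a v : ℝ) : ℂ) ^ (2 * s)
        = ∑' v : {v : ℤ × ℤ // v ≠ (0, 0)},
            2 * (Complex.exp (Complex.I * ((P v : ℝ) : ℂ)) * ((T : ℝ) : ℂ) ^ s /
              ((a v : ℝ) : ℂ) ^ (2 * s) +
            Complex.exp (-(Complex.I * ((P v : ℝ) : ℂ))) * ((T : ℝ) : ℂ) ^ s /
              ((a v : ℝ) : ℂ) ^ (2 * s)) := by
      calc (4 : ℂ) * ∑' v : {v : ℤ × ℤ // v ≠ (0, 0)},
            Complex.exp (Complex.I * ((P v : ℝ) : ℂ)) * ((T : ℝ) : ℂ) ^ s /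
              ((a v : ℝ) : ℂ) ^ (2 * s)
          = 2 * (∑' v : {v : ℤ × ℤ // v ≠ (0, 0)},
              Complex.exp (Complex.I * ((P v : ℝ) : ℂ)) * ((T : ℝ) : ℂ) ^ s /
                ((a v : ℝ) : ℂ) ^ (2 * s)) +
            2 * (∑' v : {v : ℤ × ℤ // v ≠ (0, 0)},
              Complex.exp (Complex.I * ((P v : ℝ) : ℂ)) * ((T : ℝ) : ℂ) ^ s /
                ((a v : ℝ) : ℂ) ^ (2 * s)) := by ring
        _ = 2 * (∑' v : {v : ℤ × ℤ // v ≠ (0, 0)},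
              Complex.exp (Complex.I * ((P v : ℝ) : ℂ)) * ((T : ℝ) : ℂ) ^ s /
                ((a v : ℝ) : ℂ) ^ (2 * s)) +
            2 * (∑' v : {v : ℤ × ℤ // v ≠ (0, 0)},
              Complex.exp (-(Complex.I * ((P v : ℝ) : ℂ))) * ((T : ℝ) : ℂ) ^ s /
                ((a v : ℝ) : ℂ) ^ (2 * s)) := by rw [hS1']
        _ = 2 * ((∑' v : {v : ℤ × ℤ // v ≠ (0, 0)},
              Complex.exp (Complex.I * ((P v : ℝ) : ℂ)) * ((T : ℝ) : ℂ) ^ s /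
                ((a v : ℝ) : ℂ) ^ (2 * s)) +
            (∑' v : {v : ℤ × ℤ // v ≠ (0, 0)},
              Complex.exp (-(Complex.I * ((P v : ℝ) : ℂ))) * ((T : ℝ) : ℂ) ^ s /
                ((a v : ℝ) : ℂ) ^ (2 * s))) := by ring
        _ = 2 * ∑' v : {v : ℤ × ℤ // v ≠ (0, 0)},
              (Complex.exp (Complex.I * ((P v : ℝ) : ℂ)) * ((T : ℝ) : ℂ) ^ s /
                ((a v : ℝ) : ℂ) ^ (2 * s) +
               Complex.exp (-(Complex.I * ((P v : ℝ) : ℂ))) * ((T : ℝ) : ℂ) ^ s /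
                ((a v : ℝ) : ℂ) ^ (2 * s)) := by rw [Summable.tsum_add hE hE']
        _ = ∑' v : {v : ℤ × ℤ // v ≠ (0, 0)},
              2 * (Complex.exp (Complex.I * ((P v : ℝ) : ℂ)) * ((T : ℝ) : ℂ) ^ s /
                ((a v : ℝ) : ℂ) ^ (2 * s) +
               Complex.exp (-(Complex.I * ((P v : ℝ) : ℂ))) * ((T : ℝ) : ℂ) ^ s /
                ((a v : ℝ) : ℂ) ^ (2 * s)) := (tsum_mul_left).symm
    rw [h4, ← tsum_mul_left, ← Summable.tsum_add (hw.mul_left 20) (((hE.add hE').mul_left 2))]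
    refine tsum_congr fun v => ?_
    have h5 := hcos' v
    push_cast at h5 ⊢
    linear_combination (2 * (((T : ℝ) : ℂ) ^ s / ((a v : ℝ) : ℂ) ^ (2 * s))) * h5
  rw [hRHSsum, ← tsum_mul_left, ← tsum_mul_left]
  refine tsum_congr fun v => ?_
  have hco := coeff_id hY hT (ha v) s
  have hGne : Complex.Gamma s ≠ 0 := Complex.Gamma_ne_zero_of_re_pos hs0
  linear_combination (((20 + 4 * Real.cos (P v) : ℝ) : ℂ) * Complex.Gamma s) * hco

end AuxDegen

/-- Evaluation of the degenerate-orbit contribution to the one-loop modular integral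
in terms of the Epstein zeta functions E(τ,s) and E(α,β;τ,s). -/
theorem degenerate_orbit_integral (τ z σ : ℂ) (hτ : 0 < τ.im)
    (hY : 0 < τ.im * σ.im - z.im ^ 2) (s : ℂ) (hs : 1 < s.re) :
    (((τ.im * σ.im - z.im ^ 2) / (2 * τ.im) : ℝ) : ℂ) *
      ∫ t in Set.Ioi (0 : ℝ), (t : ℂ) ^ (-1 - s) *
        ∑' v : {v : ℤ × ℤ // v ≠ (0, 0)},
          ((Real.exp (-(π * (τ.im * σ.im - z.im ^ 2) *
              ‖(v.1.1 : ℂ) + (v.1.2 : ℂ) * τ‖ ^ 2) / (t * τ.im ^ 2)) *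
            (20 + 4 * Real.cos (2 * π *
              (z * ((v.1.1 : ℂ) + (v.1.2 : ℂ) * (starRingEnd ℂ) τ)).im / τ.im)) : ℝ) : ℂ) =
      Complex.Gamma s / (2 * (π : ℂ)) *
        (((τ.im / (π * (τ.im * σ.im - z.im ^ 2)) : ℝ) : ℂ)) ^ (s - 1) *
        (20 * ∑' v : {v : ℤ × ℤ // v ≠ (0, 0)},
            (τ.im : ℂ) ^ s / ((‖(v.1.1 : ℂ) + (v.1.2 : ℂ) * τ‖ : ℝ) : ℂ) ^ (2 * s) +
         4 * ∑' v : {v : ℤ × ℤ // v ≠ (0, 0)},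
            exp (2 * (π : ℂ) * I * ((v.1.1 : ℂ) * ((z.im / τ.im : ℝ) : ℂ) +
              (v.1.2 : ℂ) * (((z * (starRingEnd ℂ) τ).im / τ.im : ℝ) : ℂ))) *
            (τ.im : ℂ) ^ s / ((‖(v.1.1 : ℂ) + (v.1.2 : ℂ) * τ‖ : ℝ) : ℂ) ^ (2 * s)) := by
  have hπ : (0 : ℝ) < π := Real.pi_pos
  have hnz : ∀ v : {v : ℤ × ℤ // v ≠ (0, 0)}, ((v.1.1 : ℂ) + (v.1.2 : ℂ) * τ) ≠ 0 := by
    intro v h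
    have himz : ((v.1.1 : ℂ) + (v.1.2 : ℂ) * τ).im = 0 := by rw [h]; simp
    have h2 : (v.1.2 : ℝ) * τ.im = 0 := by simpa using himz
    have h2' : v.1.2 = 0 := by
      rcases mul_eq_zero.mp h2 with h' | h'
      · exact_mod_cast h'
      · exact absurd h' hτ.ne'
    have hrez : ((v.1.1 : ℂ) + (v.1.2 : ℂ) * τ).re = 0 := by rw [h]; simp
    have h1' : v.1.1 = 0 := by
      rw [h2'] at hrez
      simpa using hrez
    exact v.2 (Prod.ext h1' h2')
  have ha : ∀ v : {v : ℤ × ℤ // v ≠ (0, 0)},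
      0 < ‖(v.1.1 : ℂ) + (v.1.2 : ℂ) * τ‖ := fun v => norm_pos_iff.mpr (hnz v)
  have haneg : ∀ v : {v : ℤ × ℤ // v ≠ (0, 0)},
      ‖((negE v).1.1 : ℂ) + ((negE v).1.2 : ℂ) * τ‖
        = ‖(v.1.1 : ℂ) + (v.1.2 : ℂ) * τ‖ := by
    intro v
    simp only [negE, Equiv.coe_fn_mk]
    rw [show (((-v.1.1 : ℤ) : ℂ) + ((-v.1.2 : ℤ) : ℂ) * τ)
        = -((v.1.1 : ℂ) + (v.1.2 : ℂ) * τ) by push_cast; ring, norm_neg]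
  have hPneg : ∀ v : {v : ℤ × ℤ // v ≠ (0, 0)},
      2 * π * (((negE v).1.1 : ℝ) * z.im + ((negE v).1.2 : ℝ) * (z * (starRingEnd ℂ) τ).im) / τ.im
        = -(2 * π * ((v.1.1 : ℝ) * z.im + (v.1.2 : ℝ) * (z * (starRingEnd ℂ) τ).im) / τ.im) := by
    intro v
    simp only [negE, Equiv.coe_fn_mk]
    push_cast
    ring
  have hsum : ∀ k : ℝ, 2 < k → Summable fun v : {v : ℤ × ℤ // v ≠ (0, 0)} =>
      ‖(v.1.1 : ℂ) + (v.1.2 : ℂ) * τ‖ ^ (-k) := fun k hk =>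
    summable_lattice τ hτ hk
  have key := main_aux τ.im (τ.im * σ.im - z.im ^ 2) hτ hY s hs
    (fun v => ‖(v.1.1 : ℂ) + (v.1.2 : ℂ) * τ‖)
    (fun v => 2 * π * ((v.1.1 : ℝ) * z.im + (v.1.2 : ℝ) * (z * (starRingEnd ℂ) τ).im) / τ.im)
    ha haneg hPneg hsum
  have hcosarg : ∀ v : {v : ℤ × ℤ // v ≠ (0, 0)},
      2 * π * (z * ((v.1.1 : ℂ) + (v.1.2 : ℂ) * (starRingEnd ℂ) τ)).im / τ.im
        = 2 * π * ((v.1.1 : ℝ) * z.im + (v.1.2 : ℝ) * (z * (starRingEnd ℂ) τ).im) / τ.im := by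
    intro v
    have him : (z * ((v.1.1 : ℂ) + (v.1.2 : ℂ) * (starRingEnd ℂ) τ)).im
        = (v.1.1 : ℝ) * z.im + (v.1.2 : ℝ) * (z * (starRingEnd ℂ) τ).im := by
      simp only [Complex.mul_im, Complex.add_re, Complex.add_im, Complex.mul_re,
        Complex.intCast_re, Complex.intCast_im]
      ring
    rw [him]
  have hexpArg : ∀ v : {v : ℤ × ℤ // v ≠ (0, 0)},
      2 * (π : ℂ) * I * ((v.1.1 : ℂ) * ((z.im / τ.im : ℝ) : ℂ) +
          (v.1.2 : ℂ) * (((z * (starRingEnd ℂ) τ).im / τ.im : ℝ) : ℂ))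
        = Complex.I * ((2 * π * ((v.1.1 : ℝ) * z.im +
            (v.1.2 : ℝ) * (z * (starRingEnd ℂ) τ).im) / τ.im : ℝ) : ℂ) := by
    intro v
    push_cast
    ring
  simp only [hcosarg, hexpArg]
  exact key

end
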